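/- (Deterministic form of Lemma 2.4, null case.) For every fixed z ∈ ℝ, β > 0 and r ≥ 1: lim_{n→∞} n^{r+1/2} · BF₁₀(z | βn, r) = β^{−(r+1/2)} · ₁F₁(r+1/2, 1/2; z²/2). In particular, BF₁₀(z|βn,r) = O(n^{−(r+1/2)}) as n → ∞. -/

import Mathlib

open Real MeasureTheory Filter Asymptotics

/-- Rising factorial (Pochhammer symbol) `(a)_k`. -/
noncomputable def risingFac (a : ℝ) (k : ℕ) : ℝ := (ascPochhammer ℝ k).eval a

/-- Confluent hypergeometric function `₁F₁(a, b; x)`. -/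
noncomputable def oneF1 (a b x : ℝ) : ℝ :=
  ∑' k : ℕ, (risingFac a k / risingFac b k) * x ^ k / (Nat.factorial k : ℝ)

/-- Two-sided `z` Bayes factor `BF₁₀(z | τ², r)` as a function of `τ² = τsq`. -/
noncomputable def BF10z (z τsq r : ℝ) : ℝ :=
  (1 + τsq) ^ (-(r + 1 / 2)) *
    oneF1 (r + 1 / 2) (1 / 2) (τsq * z ^ 2 / (2 * (1 + τsq)))

/-!
Since `n / (1 + βn) → β⁻¹`, the prefactor `n^(r+1/2) (1 + βn)^(-(r+1/2))` tends to
`β^(-(r+1/2))` while the argument `βn z² / (2(1 + βn))` of `₁F₁` tends to `z²/2`.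
So the theorem reduces to the continuity of `x ↦ ₁F₁(a, b; x)` for `a, b > 0`, which holds
because on `[-M, M]` the series is dominated termwise by the convergent series at `M`.
-/

open scoped Topology

lemma risingFac_pos {a : ℝ} (ha : 0 < a) (k : ℕ) : 0 < risingFac a k :=
  ascPochhammer_pos k a ha

lemma risingFac_succ (a : ℝ) (k : ℕ) : risingFac a (k + 1) = risingFac a k * (a + k) :=
  ascPochhammer_succ_eval k a

noncomputable def oneF1Term (a b x : ℝ) (k : ℕ) : ℝ :=
  risingFac a k / risingFac b k * x ^ k / (Nat.factorial k : ℝ)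

section OneF1

variable {a b : ℝ}

lemma oneF1Term_succ (hb : 0 < b) (x : ℝ) (k : ℕ) :
    oneF1Term a b x (k + 1) = oneF1Term a b x k * ((a + k) / (b + k) * (x / (k + 1))) := by
  have hbk : b + k ≠ 0 := by positivity
  have := (risingFac_pos hb k).ne'
  simp only [oneF1Term, risingFac_succ, pow_succ, Nat.factorial_succ, Nat.cast_mul,
    Nat.cast_succ]
  field_simp

lemma abs_oneF1Term (ha : 0 < a) (hb : 0 < b) (x : ℝ) (k : ℕ) :
    |oneF1Term a b x k| = oneF1Term a b |x| k := by
  simp only [oneF1Term, abs_div, abs_mul, abs_pow, Nat.abs_cast,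
    abs_of_pos (risingFac_pos ha k), abs_of_pos (risingFac_pos hb k)]

lemma oneF1Term_mono (ha : 0 < a) (hb : 0 < b) {x y : ℝ} (hx : 0 ≤ x) (hxy : x ≤ y) (k : ℕ) :
    oneF1Term a b x k ≤ oneF1Term a b y k := by
  have := (risingFac_pos ha k).le
  have := (risingFac_pos hb k).le
  unfold oneF1Term
  gcongr

lemma summable_oneF1Term (hb : 0 < b) (x : ℝ) : Summable (oneF1Term a b x) := by
  have hratio : Tendsto (fun k : ℕ => (a + k) / (b + k) * (x / (k + 1))) atTop (𝓝 0) := by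
    have h₁ : Tendsto (fun k : ℕ => (a + 1 * k) / (b + 1 * k)) atTop (𝓝 (1 / 1)) :=
      tendsto_add_mul_div_add_mul_atTop_nhds a b 1 one_ne_zero
    have h₂ := tendsto_one_div_add_atTop_nhds_zero_nat.const_mul x
    simpa [div_eq_mul_inv] using h₁.mul h₂
  refine summable_of_ratio_norm_eventually_le (r := 1 / 2) (by norm_num) ?_
  filter_upwards [hratio.norm.eventually_le_const (by norm_num : ‖(0 : ℝ)‖ < 1 / 2)] with k hk
  rw [oneF1Term_succ hb, norm_mul, mul_comm]
  gcongr

theorem continuous_oneF1 (ha : 0 < a) (hb : 0 < b) : Continuous (oneF1 a b) := by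
  have hIcc : ∀ M : ℝ, ContinuousOn (oneF1 a b) (Set.Icc (-M) M) := fun M =>
    continuousOn_tsum (fun k => by fun_prop) (summable_oneF1Term hb M) fun k x hx => by
      change |oneF1Term a b x k| ≤ _
      rw [abs_oneF1Term ha hb]
      exact oneF1Term_mono ha hb (abs_nonneg x) (abs_le.2 hx) k
  refine continuous_iff_continuousAt.2 fun x => (hIcc (|x| + 1)).continuousAt ?_
  exact Icc_mem_nhds (by linarith [neg_abs_le x]) (by linarith [le_abs_self x])

end OneF1

lemma isBigO_rpow_neg_of_tendsto_rpow_mul {α : Type*} {l : Filter α} {f g : α → ℝ} {p L : ℝ}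
    (hg : ∀ᶠ x in l, 0 < g x) (h : Tendsto (fun x => g x ^ p * f x) l (𝓝 L)) :
    f =O[l] fun x => g x ^ (-p) := by
  have hO := (h.isBigO_one ℝ).mul (isBigO_refl (fun x => g x ^ (-p)) l)
  simp only [one_mul] at hO
  refine EventuallyEq.trans_isBigO ?_ hO
  filter_upwards [hg] with x hx
  rw [mul_comm _ (f x), mul_assoc, ← rpow_add hx, add_neg_cancel, rpow_zero, mul_one]

/-- Deterministic form of Lemma 2.4, null case. -/
theorem lemma24_null (z β r : ℝ) (hβ : 0 < β) (hr : 1 ≤ r) :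
    Tendsto (fun n : ℕ => (n : ℝ) ^ (r + 1 / 2) * BF10z z (β * n) r) atTop
      (nhds (β ^ (-(r + 1 / 2)) * oneF1 (r + 1 / 2) (1 / 2) (z ^ 2 / 2))) ∧
    (fun n : ℕ => BF10z z (β * n) r) =O[atTop] fun n : ℕ => (n : ℝ) ^ (-(r + 1 / 2)) := by
  have hden (n : ℕ) : 0 < 1 + β * n := by positivity
  have hratio : Tendsto (fun n : ℕ => (n : ℝ) / (1 + β * n)) atTop (𝓝 β⁻¹) := by
    simpa using tendsto_add_mul_div_add_mul_atTop_nhds (0 : ℝ) 1 1 hβ.ne'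
  have harg : Tendsto (fun n : ℕ => β * n * z ^ 2 / (2 * (1 + β * n))) atTop
      (𝓝 (z ^ 2 / 2)) := by
    have h := (hratio.const_mul β).mul_const (z ^ 2 / 2)
    rw [mul_inv_cancel₀ hβ.ne', one_mul] at h
    refine h.congr fun n => ?_
    field_simp [(hden n).ne']
  have hF := ((continuous_oneF1 (a := r + 1 / 2) (by linarith) one_half_pos).tendsto _).comp harg
  have hprod := (hratio.rpow_const (p := r + 1 / 2) (Or.inl (inv_ne_zero hβ.ne'))).mul hF
  rw [inv_rpow hβ.le, ← rpow_neg hβ.le] at hprod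
  have hmain : Tendsto (fun n : ℕ => (n : ℝ) ^ (r + 1 / 2) * BF10z z (β * n) r) atTop
      (nhds (β ^ (-(r + 1 / 2)) * oneF1 (r + 1 / 2) (1 / 2) (z ^ 2 / 2))) := by
    refine hprod.congr fun n => ?_
    rw [BF10z, Function.comp_apply, div_rpow (Nat.cast_nonneg n) (hden n).le,
      rpow_neg (hden n).le]
    ring
  have hpos : ∀ᶠ n : ℕ in atTop, (0 : ℝ) < n :=
    (eventually_gt_atTop 0).mono fun n hn => Nat.cast_pos.2 hn
  exact ⟨hmain, isBigO_rpow_neg_of_tendsto_rpow_mul hpos hmain⟩
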